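/- For every thread ψ0, ψ1, … in a trace of an infinite play of the satisfiability game G_θ that is a U-thread or an R-thread, there is an index i such that ψ_i is a U-formula, respectively an R-formula, and for all j ≥ i either ψ_j = ψ_i or ψ_j = Xψ_i. -/

import Mathlib

/-- Branching-time formulas in negation normal form. -/
inductive Form : Type where
  | tt : Form
  | ff : Form
  | prop : ℕ → Form
  | nprop : ℕ → Form
  | or : Form → Form → Form
  | and : Form → Form → Form
  | next : Form → Form
  | unt : Form → Form → Form
  | rel : Form → Form → Form
  | ex : Form → Form
  | al : Form → Form
deriving DecidableEq

namespace Form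

/-- The set of subformulas of a formula. -/
def subf : Form → Finset Form
  | .tt => {.tt}
  | .ff => {.ff}
  | .prop p => {.prop p}
  | .nprop p => {.nprop p}
  | .or a b => insert (.or a b) (a.subf ∪ b.subf)
  | .and a b => insert (.and a b) (a.subf ∪ b.subf)
  | .next a => insert (.next a) a.subf
  | .unt a b => insert (.unt a b) (a.subf ∪ b.subf)
  | .rel a b => insert (.rel a b) (a.subf ∪ b.subf)
  | .ex a => insert (.ex a) a.subf
  | .al a => insert (.al a) a.subf

/-- Literals are `tt`, `ff`, `p` and `¬p`. -/
def IsLiteral : Form → Prop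
  | .tt => True
  | .ff => True
  | .prop _ => True
  | .nprop _ => True
  | _ => False

/-- A formula of the form `Xφ`. -/
def IsNext : Form → Prop
  | .next _ => True
  | _ => False

/-- Remove a frontal `X`. -/
def unX : Form → Form
  | .next a => a
  | a => a

end Form

/-- The Fischer-Ladner closure of a formula: its subformulas together with
`X(φ U ψ)` for every subformula `φ U ψ` and `X(φ R ψ)` for every subformula `φ R ψ`. -/
def FL (θ : Form) : Finset Form :=
  θ.subf ∪ θ.subf.image (fun ψ =>
    match ψ with
    | .unt a b => Form.next (.unt a b)
    | .rel a b => Form.next (.rel a b)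
    | _ => θ)

/-- A (total) transition system with a designated initial state and a labeling
of states with sets of propositional constants. -/
structure TS (S : Type) where
  init : S
  step : S → S → Prop
  total : ∀ s, ∃ t, step s t
  label : S → Set ℕ

/-- An infinite path through a transition system. -/
structure TS.Path {S : Type} (T : TS S) where
  seq : ℕ → S
  valid : ∀ i, T.step (seq i) (seq (i + 1))

/-- The suffix `π^k` of a path `π`. -/
def TS.Path.suffix {S : Type} {T : TS S} (π : T.Path) (k : ℕ) : T.Path :=
  ⟨fun i => π.seq (k + i), fun i => π.valid (k + i)⟩

/-- Satisfaction of a branching-time formula on a path of a transition system. -/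
def Sat {S : Type} (T : TS S) : T.Path → Form → Prop
  | _, .tt => True
  | _, .ff => False
  | π, .prop p => p ∈ T.label (π.seq 0)
  | π, .nprop p => p ∉ T.label (π.seq 0)
  | π, .or a b => Sat T π a ∨ Sat T π b
  | π, .and a b => Sat T π a ∧ Sat T π b
  | π, .next a => Sat T (π.suffix 1) a
  | π, .unt a b => ∃ k, Sat T (π.suffix k) b ∧ ∀ j < k, Sat T (π.suffix j) a
  | π, .rel a b => ∀ k, Sat T (π.suffix k) b ∨ ∃ j < k, Sat T (π.suffix j) a
  | π, .ex a => ∃ π' : T.Path, π'.seq 0 = π.seq 0 ∧ Sat T π' a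
  | π, .al a => ∀ π' : T.Path, π'.seq 0 = π.seq 0 → Sat T π' a

/-- A state formula: satisfaction only depends on the first state of the path. -/
def IsStateForm (φ : Form) : Prop :=
  ∀ (S : Type) (T : TS S) (π π' : T.Path), π.seq 0 = π'.seq 0 → (Sat T π φ ↔ Sat T π' φ)

/-- A (state) formula is satisfiable if it holds at the initial state of some
transition system. -/
def Satisfiable (φ : Form) : Prop :=
  ∃ (S : Type) (T : TS S) (π : T.Path), π.seq 0 = T.init ∧ Sat T π φ

/-- Equivalence of branching-time formulas. -/
def FormEquiv (φ ψ : Form) : Prop :=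
  ∀ (S : Type) (T : TS S) (π : T.Path), Sat T π φ ↔ Sat T π ψ

/-- Path quantifiers. -/
inductive Quant : Type where
  | A : Quant
  | E : Quant
deriving DecidableEq

/-- Apply a path quantifier to a formula. -/
def Quant.apply : Quant → Form → Form
  | .A, φ => .al φ
  | .E, φ => .ex φ

/-- A quantifier-bound block `AΣ` or `EΠ`. -/
structure Block : Type where
  q : Quant
  fs : Finset Form
deriving DecidableEq

/-- Remove the frontal `X` from each formula of a block. -/
def Block.unX (b : Block) : Block := ⟨b.q, b.fs.image Form.unX⟩

/-- A configuration: a set of quantifier-bound blocks together with a set of literals. -/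
structure Config : Type where
  blocks : Finset Block
  lits : Finset Form
deriving DecidableEq

def Config.addBlock (C : Config) (b : Block) : Config := ⟨insert b C.blocks, C.lits⟩

def Config.addLit (C : Config) (l : Form) : Config := ⟨C.blocks, insert l C.lits⟩

/-- A well-formed configuration for `θ`: nonempty, all block formulas are taken from
the Fischer-Ladner closure of `θ` and the literal part consists of literals from it. -/
def Config.Wf (θ : Form) (C : Config) : Prop :=
  (C.blocks.Nonempty ∨ C.lits.Nonempty) ∧
  (∀ b ∈ C.blocks, b.fs ⊆ FL θ) ∧
  (∀ l ∈ C.lits, l.IsLiteral ∧ l ∈ FL θ)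

/-- Consistency: neither `ff` nor a complementary pair of literals occurs. -/
def Config.Consistent (C : Config) : Prop :=
  Form.ff ∉ C.lits ∧ ∀ p : ℕ, ¬ (Form.prop p ∈ C.lits ∧ Form.nprop p ∈ C.lits)

/-- The initial configuration `E{θ}`. -/
def Config.initial (θ : Form) : Config := ⟨{⟨Quant.E, {θ}⟩}, ∅⟩

/-- An instance of a rule application of the satisfiability game.  Each constructor
records the principal data, the choice of successor (for branching rules), and the
remainder `Φ` of the configuration which is copied unchanged. -/
inductive RuleApp : Type where
  | aand (a b : Form) (Γ : Finset Form) (Φ : Config) (h : Form.and a b ∉ Γ)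
  | aor (a b : Form) (Γ : Finset Form) (Φ : Config) (h : Form.or a b ∉ Γ)
  | alit (l : Form) (Γ : Finset Form) (Φ : Config) (hl : l.IsLiteral) (h : l ∉ Γ) (c : Bool)
  | au (a b : Form) (Γ : Finset Form) (Φ : Config) (h : Form.unt a b ∉ Γ)
  | ar (a b : Form) (Γ : Finset Form) (Φ : Config) (h : Form.rel a b ∉ Γ)
  | aa (a : Form) (Γ : Finset Form) (Φ : Config) (h : Form.al a ∉ Γ) (c : Bool)
  | ae (a : Form) (Γ : Finset Form) (Φ : Config) (h : Form.ex a ∉ Γ) (c : Bool)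
  | ett (Φ : Config)
  | eor (a b : Form) (Γ : Finset Form) (Φ : Config) (h : Form.or a b ∉ Γ) (c : Bool)
  | eand (a b : Form) (Γ : Finset Form) (Φ : Config) (h : Form.and a b ∉ Γ)
  | elit (l : Form) (Γ : Finset Form) (Φ : Config) (hl : l.IsLiteral) (h : l ∉ Γ)
  | eu (a b : Form) (Γ : Finset Form) (Φ : Config) (h : Form.unt a b ∉ Γ) (c : Bool)
  | ee (a : Form) (Γ : Finset Form) (Φ : Config) (h : Form.ex a ∉ Γ)
  | er (a b : Form) (Γ : Finset Form) (Φ : Config) (h : Form.rel a b ∉ Γ) (c : Bool)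
  | ea (a : Form) (Γ : Finset Form) (Φ : Config) (h : Form.al a ∉ Γ)
  | x0 (C : Config) (h : ∀ b ∈ C.blocks, b.q = Quant.A ∧ ∀ f ∈ b.fs, f.IsNext)
       (hne : C.blocks.Nonempty)
  | x1 (C : Config) (b0 : Block) (hb0 : b0 ∈ C.blocks ∧ b0.q = Quant.E)
       (h : ∀ b ∈ C.blocks, ∀ f ∈ b.fs, f.IsNext)

namespace RuleApp

/-- The configuration a rule application is applied to. -/
def src : RuleApp → Config
  | .aand a b Γ Φ _ => Φ.addBlock ⟨Quant.A, insert (.and a b) Γ⟩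
  | .aor a b Γ Φ _ => Φ.addBlock ⟨Quant.A, insert (.or a b) Γ⟩
  | .alit l Γ Φ _ _ _ => Φ.addBlock ⟨Quant.A, insert l Γ⟩
  | .au a b Γ Φ _ => Φ.addBlock ⟨Quant.A, insert (.unt a b) Γ⟩
  | .ar a b Γ Φ _ => Φ.addBlock ⟨Quant.A, insert (.rel a b) Γ⟩
  | .aa a Γ Φ _ _ => Φ.addBlock ⟨Quant.A, insert (.al a) Γ⟩
  | .ae a Γ Φ _ _ => Φ.addBlock ⟨Quant.A, insert (.ex a) Γ⟩
  | .ett Φ => Φ.addBlock ⟨Quant.E, {Form.tt}⟩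
  | .eor a b Γ Φ _ _ => Φ.addBlock ⟨Quant.E, insert (.or a b) Γ⟩
  | .eand a b Γ Φ _ => Φ.addBlock ⟨Quant.E, insert (.and a b) Γ⟩
  | .elit l Γ Φ _ _ => Φ.addBlock ⟨Quant.E, insert l Γ⟩
  | .eu a b Γ Φ _ _ => Φ.addBlock ⟨Quant.E, insert (.unt a b) Γ⟩
  | .ee a Γ Φ _ => Φ.addBlock ⟨Quant.E, insert (.ex a) Γ⟩
  | .er a b Γ Φ _ _ => Φ.addBlock ⟨Quant.E, insert (.rel a b) Γ⟩
  | .ea a Γ Φ _ => Φ.addBlock ⟨Quant.E, insert (.al a) Γ⟩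
  | .x0 C _ _ => C
  | .x1 C _ _ _ => C

/-- The chosen successor configuration of a rule application. -/
def tgt : RuleApp → Config
  | .aand a b Γ Φ _ => (Φ.addBlock ⟨Quant.A, insert a Γ⟩).addBlock ⟨Quant.A, insert b Γ⟩
  | .aor a b Γ Φ _ => Φ.addBlock ⟨Quant.A, insert a (insert b Γ)⟩
  | .alit l Γ Φ _ _ c => if c then Φ.addBlock ⟨Quant.A, Γ⟩ else Φ.addLit l
  | .au a b Γ Φ _ =>
      (Φ.addBlock ⟨Quant.A, insert b (insert a Γ)⟩).addBlock
        ⟨Quant.A, insert b (insert (.next (.unt a b)) Γ)⟩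
  | .ar a b Γ Φ _ =>
      (Φ.addBlock ⟨Quant.A, insert b Γ⟩).addBlock
        ⟨Quant.A, insert a (insert (.next (.rel a b)) Γ)⟩
  | .aa a Γ Φ _ c => if c then Φ.addBlock ⟨Quant.A, Γ⟩ else Φ.addBlock ⟨Quant.A, {a}⟩
  | .ae a Γ Φ _ c => if c then Φ.addBlock ⟨Quant.A, Γ⟩ else Φ.addBlock ⟨Quant.E, {a}⟩
  | .ett Φ => Φ
  | .eor a b Γ Φ _ c =>
      if c then Φ.addBlock ⟨Quant.E, insert b Γ⟩ else Φ.addBlock ⟨Quant.E, insert a Γ⟩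
  | .eand a b Γ Φ _ => Φ.addBlock ⟨Quant.E, insert a (insert b Γ)⟩
  | .elit l Γ Φ _ _ => (Φ.addBlock ⟨Quant.E, Γ⟩).addLit l
  | .eu a b Γ Φ _ c =>
      if c then Φ.addBlock ⟨Quant.E, insert a (insert (.next (.unt a b)) Γ)⟩
      else Φ.addBlock ⟨Quant.E, insert b Γ⟩
  | .ee a Γ Φ _ => (Φ.addBlock ⟨Quant.E, {a}⟩).addBlock ⟨Quant.E, Γ⟩
  | .er a b Γ Φ _ c =>
      if c then Φ.addBlock ⟨Quant.E, insert b (insert (.next (.rel a b)) Γ)⟩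
      else Φ.addBlock ⟨Quant.E, insert b (insert a Γ)⟩
  | .ea a Γ Φ _ => (Φ.addBlock ⟨Quant.A, {a}⟩).addBlock ⟨Quant.E, Γ⟩
  | .x0 C _ _ => ⟨C.blocks.image Block.unX, ∅⟩
  | .x1 C b0 _ _ =>
      ⟨insert b0.unX ((C.blocks.filter (fun b => b.q = Quant.A)).image Block.unX), ∅⟩

/-- Is this an application of one of the modal rules `(X0)` or `(X1)`? -/
def IsModal : RuleApp → Prop
  | .x0 _ _ _ => True
  | .x1 _ _ _ _ => True
  | _ => False

/-- Is this an application of rule `(X1)`? -/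
def IsX1 : RuleApp → Prop
  | .x1 _ _ _ _ => True
  | _ => False

/-- For a non-modal rule application: the remainder `Φ`, the principal block, the
principal formula, and the set of descendant blocks each together with the set of
descendants of the principal formula in it. -/
def nonModalData? : RuleApp → Option (Config × Block × Form × Set (Block × Set Form))
  | .aand a b Γ Φ _ =>
      some (Φ, ⟨Quant.A, insert (.and a b) Γ⟩, .and a b,
        {(⟨Quant.A, insert a Γ⟩, {a}), (⟨Quant.A, insert b Γ⟩, {b})})
  | .aor a b Γ Φ _ =>
      some (Φ, ⟨Quant.A, insert (.or a b) Γ⟩, .or a b,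
        {(⟨Quant.A, insert a (insert b Γ)⟩, {a, b})})
  | .alit l Γ Φ _ _ c =>
      some (Φ, ⟨Quant.A, insert l Γ⟩, l,
        if c then {(⟨Quant.A, Γ⟩, ∅)} else ∅)
  | .au a b Γ Φ _ =>
      some (Φ, ⟨Quant.A, insert (.unt a b) Γ⟩, .unt a b,
        {(⟨Quant.A, insert b (insert a Γ)⟩, {b, a}),
         (⟨Quant.A, insert b (insert (.next (.unt a b)) Γ)⟩, {b, .next (.unt a b)})})
  | .ar a b Γ Φ _ =>
      some (Φ, ⟨Quant.A, insert (.rel a b) Γ⟩, .rel a b,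
        {(⟨Quant.A, insert b Γ⟩, {b}),
         (⟨Quant.A, insert a (insert (.next (.rel a b)) Γ)⟩, {a, .next (.rel a b)})})
  | .aa a Γ Φ _ c =>
      some (Φ, ⟨Quant.A, insert (.al a) Γ⟩, .al a,
        if c then {(⟨Quant.A, Γ⟩, ∅)} else {(⟨Quant.A, ({a} : Finset Form)⟩, {a})})
  | .ae a Γ Φ _ c =>
      some (Φ, ⟨Quant.A, insert (.ex a) Γ⟩, .ex a,
        if c then {(⟨Quant.A, Γ⟩, ∅)} else {(⟨Quant.E, ({a} : Finset Form)⟩, {a})})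
  | .ett Φ => some (Φ, ⟨Quant.E, {Form.tt}⟩, .tt, ∅)
  | .eor a b Γ Φ _ c =>
      some (Φ, ⟨Quant.E, insert (.or a b) Γ⟩, .or a b,
        if c then {(⟨Quant.E, insert b Γ⟩, {b})} else {(⟨Quant.E, insert a Γ⟩, {a})})
  | .eand a b Γ Φ _ =>
      some (Φ, ⟨Quant.E, insert (.and a b) Γ⟩, .and a b,
        {(⟨Quant.E, insert a (insert b Γ)⟩, {a, b})})
  | .elit l Γ Φ _ _ =>
      some (Φ, ⟨Quant.E, insert l Γ⟩, l, {(⟨Quant.E, Γ⟩, ∅)})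
  | .eu a b Γ Φ _ c =>
      some (Φ, ⟨Quant.E, insert (.unt a b) Γ⟩, .unt a b,
        if c then {(⟨Quant.E, insert a (insert (.next (.unt a b)) Γ)⟩, {a, .next (.unt a b)})}
        else {(⟨Quant.E, insert b Γ⟩, {b})})
  | .ee a Γ Φ _ =>
      some (Φ, ⟨Quant.E, insert (.ex a) Γ⟩, .ex a,
        {(⟨Quant.E, ({a} : Finset Form)⟩, {a}), (⟨Quant.E, Γ⟩, ∅)})
  | .er a b Γ Φ _ c =>
      some (Φ, ⟨Quant.E, insert (.rel a b) Γ⟩, .rel a b,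
        if c then {(⟨Quant.E, insert b (insert (.next (.rel a b)) Γ)⟩, {b, .next (.rel a b)})}
        else {(⟨Quant.E, insert b (insert a Γ)⟩, {b, a})})
  | .ea a Γ Φ _ =>
      some (Φ, ⟨Quant.E, insert (.al a) Γ⟩, .al a,
        {(⟨Quant.A, ({a} : Finset Form)⟩, {a}), (⟨Quant.E, Γ⟩, ∅)})
  | .x0 _ _ _ => none
  | .x1 _ _ _ _ => none

/-- The principal block and principal formula of a non-modal rule application. -/
def principal? (r : RuleApp) : Option (Block × Form) :=
  r.nonModalData?.map (fun d => (d.2.1, d.2.2.1))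

end RuleApp

/-- Copy-or-descendant scheme for block connections of non-modal rules. -/
def BlockCopyDesc (Φ : Config) (P : Block) (D : Set Block) (b b' : Block) : Prop :=
  (b ∈ Φ.blocks ∧ b' = b) ∨ (b = P ∧ b' ∈ D)

/-- Copy-or-descendant scheme for formula connections of non-modal rules. -/
def FormCopyDesc (Φ : Config) (P : Block) (princ : Form) (D : Set (Block × Set Form))
    (b b' : Block) (f f' : Form) : Prop :=
  (b ∈ Φ.blocks ∧ b' = b ∧ f ∈ b.fs ∧ f' = f) ∨
  (b = P ∧ ∃ d ∈ D, b' = d.1 ∧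
    ((f = princ ∧ f' ∈ d.2) ∨ (f ∈ P.fs ∧ f ≠ princ ∧ f' = f ∧ f ∈ d.1.fs)))

namespace RuleApp

/-- The connection relation `(C,QΔ) ⤳ (C',Q'Δ')` on blocks induced by a rule application. -/
def BlockConn (r : RuleApp) (b b' : Block) : Prop :=
  match r with
  | .x0 C _ _ => b ∈ C.blocks ∧ b' = b.unX
  | .x1 C b0 _ _ =>
      b ∈ C.blocks ∧ ((b.q = Quant.A ∧ b' = b.unX) ∨ (b = b0 ∧ b' = b0.unX))
  | r =>
      match r.nonModalData? with
      | some (Φ, P, _, D) => BlockCopyDesc Φ P (Prod.fst '' D) b b'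
      | none => False

/-- The connection relation `(C,QΔ,ψ) ⤳ (C',Q'Δ',ψ')` on formulas inside blocks
induced by a rule application. -/
def FormConn (r : RuleApp) (b b' : Block) (f f' : Form) : Prop :=
  match r with
  | .x0 C _ _ => b ∈ C.blocks ∧ b' = b.unX ∧ f ∈ b.fs ∧ f = .next f'
  | .x1 C b0 _ _ =>
      b ∈ C.blocks ∧ (b.q = Quant.A ∨ b = b0) ∧ b' = b.unX ∧ f ∈ b.fs ∧ f = .next f'
  | r =>
      match r.nonModalData? with
      | some (Φ, P, princ, D) => FormCopyDesc Φ P princ D b b' f f'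
      | none => False

/-- A spawning block connection: the principal formula is `Q'ψ`, and the descendant
block is `Q'{ψ}`. -/
def Spawning (r : RuleApp) (b b' : Block) : Prop :=
  r.BlockConn b b' ∧ ∃ ψ : Form, b'.fs = {ψ} ∧ r.principal? = some (b, b'.q.apply ψ)

end RuleApp

/-- A move of the satisfiability game for `θ`: some rule application leads from `C`
to `C'`, and `C'` is again a (consistent, well-formed) configuration. -/
def Move (θ : Form) (C C' : Config) : Prop :=
  ∃ r : RuleApp, r.src = C ∧ r.tgt = C' ∧ C'.Wf θ ∧ C'.Consistent

/-- Player 1 owns exactly the configurations to which rule `(X1)` applies. -/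
def Config.Owner1 (C : Config) : Prop := ∃ r : RuleApp, r.src = C ∧ r.IsX1

/-- Player 0 owns all other configurations. -/
def Config.Owner0 (C : Config) : Prop := ¬ C.Owner1

/-- An infinite play of the satisfiability game for `θ`. -/
def IsInfPlay (θ : Form) (cfg : ℕ → Config) : Prop :=
  cfg 0 = Config.initial θ ∧ ∀ i, Move θ (cfg i) (cfg (i + 1))

/-- Blocks `b` of `C` and `b'` of `C'` are connected by some rule application from `C` to `C'`. -/
def BlockConnRel (C C' : Config) (b b' : Block) : Prop :=
  ∃ r : RuleApp, r.src = C ∧ r.tgt = C' ∧ r.BlockConn b b'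

/-- Formulas `f` in block `b` of `C` and `f'` in block `b'` of `C'` are connected by
some rule application from `C` to `C'`. -/
def FormConnRel (C C' : Config) (b b' : Block) (f f' : Form) : Prop :=
  ∃ r : RuleApp, r.src = C ∧ r.tgt = C' ∧ r.FormConn b b' f f'

/-- The block connection between `b` in `C` and `b'` in `C'` is spawning. -/
def SpawnRel (C C' : Config) (b b' : Block) : Prop :=
  ∃ r : RuleApp, r.src = C ∧ r.tgt = C' ∧ r.Spawning b b'

/-- A trace in an infinite play: an infinite sequence of connected blocks. -/
def IsTrace (cfg : ℕ → Config) (blk : ℕ → Block) : Prop :=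
  (∀ i, blk i ∈ (cfg i).blocks) ∧
  ∀ i, BlockConnRel (cfg i) (cfg (i + 1)) (blk i) (blk (i + 1))

/-- An `E`-trace: eventually all blocks are `E`-blocks. -/
def IsETrace (blk : ℕ → Block) : Prop := ∃ i, ∀ j, i ≤ j → (blk j).q = Quant.E

/-- An `A`-trace: eventually all blocks are `A`-blocks. -/
def IsATrace (blk : ℕ → Block) : Prop := ∃ i, ∀ j, i ≤ j → (blk j).q = Quant.A

/-- A thread in a trace of an infinite play: an infinite sequence of connected formulas. -/
def IsThread (cfg : ℕ → Config) (blk : ℕ → Block) (f : ℕ → Form) : Prop :=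
  (∀ i, f i ∈ (blk i).fs) ∧
  ∀ i, FormConnRel (cfg i) (cfg (i + 1)) (blk i) (blk (i + 1)) (f i) (f (i + 1))

/-- A `U`-thread: some formula `φ U ψ ∈ FL(θ)` occurs at infinitely many positions. -/
def IsUThread (θ : Form) (f : ℕ → Form) : Prop :=
  ∃ a b : Form, Form.unt a b ∈ FL θ ∧ {j | f j = Form.unt a b}.Infinite

/-- An `R`-thread: some formula `φ R ψ ∈ FL(θ)` occurs at infinitely many positions. -/
def IsRThread (θ : Form) (f : ℕ → Form) : Prop :=
  ∃ a b : Form, Form.rel a b ∈ FL θ ∧ {j | f j = Form.rel a b}.Infinite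

/-- A bad trace: an `E`-trace containing a `U`-thread or an `A`-trace containing
no `R`-thread. -/
def BadTrace (θ : Form) (cfg : ℕ → Config) (blk : ℕ → Block) : Prop :=
  (IsETrace blk ∧ ∃ f, IsThread cfg blk f ∧ IsUThread θ f) ∨
  (IsATrace blk ∧ ¬ ∃ f, IsThread cfg blk f ∧ IsRThread θ f)

/-- A prefix of a play: a finite sequence of configurations starting at the initial
configuration following the game rules. -/
def PlayPrefix (θ : Form) (l : List Config) : Prop :=
  l.head? = some (Config.initial θ) ∧ l.Chain' (Move θ)

/-- A maximal finite play: its last configuration has no successor. -/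
def FinMaxPlay (θ : Form) (l : List Config) : Prop :=
  PlayPrefix θ l ∧ ∀ C, l.getLast? = some C → ¬ ∃ C', Move θ C C'

/-- Player 0 wins a finite play iff it ends in a consistent set of literals, or in a
dead end owned by player 1. -/
def Player0WinsFin (l : List Config) : Prop :=
  ∃ C : Config, l.getLast? = some C ∧ ((C.blocks = ∅ ∧ C.Consistent) ∨ C.Owner1)

/-- Player 0 wins an infinite play iff it contains no bad trace. -/
def Player0WinsInf (θ : Form) (cfg : ℕ → Config) : Prop :=
  ¬ ∃ blk : ℕ → Block, IsTrace cfg blk ∧ BadTrace θ cfg blk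

/-- A strategy for player 0: it selects, for every play prefix ending in a
configuration owned by player 0 that has successors, one successor. -/
structure Strategy (θ : Form) where
  move : List Config → Config
  legal : ∀ (l : List Config) (C : Config), PlayPrefix θ l → l.getLast? = some C →
    C.Owner0 → (∃ C', Move θ C C') → Move θ C (move l)

/-- A finite play conforms to a strategy for player 0. -/
def ConformsList (θ : Form) (σ : Strategy θ) (l : List Config) : Prop :=
  ∀ (i : ℕ) (C C' : Config), l[i]? = some C → l[i+1]? = some C' → C.Owner0 →
    C' = σ.move (l.take (i + 1))

/-- An infinite play conforms to a strategy for player 0. -/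
def ConformsInf (θ : Form) (σ : Strategy θ) (cfg : ℕ → Config) : Prop :=
  ∀ i, (cfg i).Owner0 → cfg (i + 1) = σ.move ((List.range (i + 1)).map cfg)

/-- A winning strategy for player 0: every maximal play conforming to it is won by
player 0. -/
def Strategy.Winning {θ : Form} (σ : Strategy θ) : Prop :=
  (∀ l : List Config, FinMaxPlay θ l → ConformsList θ σ l → Player0WinsFin l) ∧
  (∀ cfg : ℕ → Config, IsInfPlay θ cfg → ConformsInf θ σ cfg → Player0WinsInf θ cfg)

/-- A formula of the form `φ U ψ`. -/
def Form.IsU : Form → Prop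
  | .unt _ _ => True
  | _ => False

/-- A formula of the form `φ R ψ`. -/
def Form.IsR : Form → Prop
  | .rel _ _ => True
  | _ => False

/-! Along a thread a formula can only pass to a proper subformula, stay unchanged, lose a
leading `X` (rules `(X0)`, `(X1)`), or be regenerated from `φUψ`, `φRψ` to `X(φUψ)`, `X(φRψ)`.
If an `X` in front of a `U`- or `R`-formula is given no weight, none of these steps increases
the weight, and passing to a proper subformula decreases it. So the weight of a thread is
eventually constant, and from then on a `U`- or `R`-formula that recurs infinitely often can
only alternate with its `X`-version. -/

namespace Form

def size : Form → ℕ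
  | .tt | .ff | .prop _ | .nprop _ => 1
  | .next a | .ex a | .al a => a.size + 1
  | .or a b | .and a b | .unt a b | .rel a b => a.size + b.size + 1

def weight : Form → ℕ
  | .next (.unt a b) => (unt a b).size
  | .next (.rel a b) => (rel a b).size
  | φ => φ.size

theorem weight_le_size (φ : Form) : φ.weight ≤ φ.size := by
  cases φ with
  | next φ => cases φ <;> simp [weight, size]
  | _ => simp [weight, size]

theorem weight_le_weight_next (φ : Form) : φ.weight ≤ (next φ).weight := by
  cases φ with
  | next φ => cases φ <;> simp [weight, size]
  | _ => simp [weight, size]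

theorem weight_next_of_isU_or_isR {φ : Form} (h : φ.IsU ∨ φ.IsR) :
    (next φ).weight = φ.weight := by
  cases φ <;> simp_all [IsU, IsR, weight]

end Form

def ThreadStep (φ ψ : Form) : Prop :=
  ψ.weight < φ.weight ∨ ψ = φ ∨ φ = .next ψ ∨ (ψ = .next φ ∧ (φ.IsU ∨ φ.IsR))

theorem ThreadStep.weight_le {φ ψ : Form} (h : ThreadStep φ ψ) : ψ.weight ≤ φ.weight := by
  rcases h with h | rfl | rfl | ⟨rfl, hUR⟩
  · exact h.le
  · exact le_rfl
  · exact ψ.weight_le_weight_next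
  · exact (Form.weight_next_of_isU_or_isR hUR).le

theorem ThreadStep.of_size_lt {φ ψ : Form} (hφ : φ.weight = φ.size) (h : ψ.size < φ.size) :
    ThreadStep φ ψ :=
  Or.inl (hφ ▸ (ψ.weight_le_size.trans_lt h))

theorem ThreadStep.next_self {φ : Form} (h : φ.IsU ∨ φ.IsR) : ThreadStep φ (.next φ) :=
  Or.inr (Or.inr (Or.inr ⟨rfl, h⟩))

theorem ThreadStep.next_left (ψ : Form) : ThreadStep (.next ψ) ψ :=
  Or.inr (Or.inr (Or.inl rfl))

theorem FormCopyDesc.threadStep {Φ : Config} {P : Block} {princ : Form}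
    {D : Set (Block × Set Form)} {b b' : Block} {φ ψ : Form}
    (hD : ∀ d ∈ D, ∀ χ ∈ d.2, ThreadStep princ χ) (h : FormCopyDesc Φ P princ D b b' φ ψ) :
    ThreadStep φ ψ := by
  rcases h with ⟨-, -, -, rfl⟩ | ⟨rfl, d, hd, -, ⟨rfl, hψ⟩ | ⟨-, -, rfl, -⟩⟩
  · exact Or.inr (Or.inl rfl)
  · exact hD d hd ψ hψ
  · exact Or.inr (Or.inl rfl)

theorem RuleApp.threadStep_of_nonModalData {r : RuleApp} {Φ : Config} {P : Block}
    {princ : Form} {D : Set (Block × Set Form)}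
    (h : r.nonModalData? = some (Φ, P, princ, D)) : ∀ d ∈ D, ∀ χ ∈ d.2, ThreadStep princ χ := by
  cases r <;> (try cases ‹Bool›) <;>
    simp only [nonModalData?, Option.some.injEq, Prod.mk.injEq, reduceCtorEq] at h <;>
    obtain ⟨-, -, rfl, rfl⟩ := h <;>
    simp only [↓reduceIte, Set.mem_insert_iff, Set.mem_singleton_iff, Set.mem_empty_iff_false,
      forall_eq_or_imp, forall_eq, IsEmpty.forall_iff, implies_true, and_true]
  all_goals repeat' apply And.intro
  all_goals first
    | exact .of_size_lt rfl (by simp only [Form.size]; omega)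
    | exact .next_self (by simp [Form.IsU, Form.IsR])

theorem RuleApp.FormConn.threadStep {r : RuleApp} {b b' : Block} {φ ψ : Form}
    (h : r.FormConn b b' φ ψ) : ThreadStep φ ψ := by
  have hD := @threadStep_of_nonModalData r
  cases r
  case x0 => obtain ⟨-, -, -, rfl⟩ := h; exact .next_left ψ
  case x1 => obtain ⟨-, -, -, -, rfl⟩ := h; exact .next_left ψ
  all_goals exact FormCopyDesc.threadStep (hD rfl) h

theorem IsThread.threadStep {cfg : ℕ → Config} {blk : ℕ → Block} {f : ℕ → Form}
    (h : IsThread cfg blk f) (i : ℕ) : ThreadStep (f i) (f (i + 1)) := by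
  obtain ⟨r, -, -, hr⟩ := h.2 i
  exact hr.threadStep

theorem ThreadStep.mem_pair_of_weight_eq {u φ ψ : Form} (hu : u.IsU ∨ u.IsR)
    (hφ : φ = u ∨ φ = .next u) (h : ThreadStep φ ψ) (hw : ψ.weight = φ.weight) :
    ψ = u ∨ ψ = .next u := by
  rcases h with hlt | rfl | rfl | ⟨rfl, hφUR⟩
  · omega
  · exact hφ
  · rcases hφ with rfl | hψ
    · cases hu <;> contradiction
    · exact Or.inl (Form.next.inj hψ)
  · rcases hφ with rfl | rfl
    · exact Or.inr rfl
    · cases hφUR <;> contradiction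

theorem exists_forall_ge_mem_pair {f : ℕ → Form} (hf : ∀ i, ThreadStep (f i) (f (i + 1)))
    {u : Form} (hu : u.IsU ∨ u.IsR) (hinf : {j | f j = u}.Infinite) :
    ∃ i, f i = u ∧ ∀ j, i ≤ j → f j = u ∨ f j = .next u := by
  obtain ⟨n, hn⟩ := WellFoundedLT.antitone_chain_condition
    (antitone_nat_of_succ_le (f := fun i => (f i).weight) fun i => (hf i).weight_le)
  obtain ⟨i, hi : f i = u, hni⟩ := hinf.exists_gt n
  refine ⟨i, hi, fun j hij => ?_⟩
  induction j, hij using Nat.le_induction with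
  | base => exact Or.inl hi
  | succ j hij ih =>
    refine (hf j).mem_pair_of_weight_eq hu ih ?_
    rw [← hn j (by omega), ← hn (j + 1) (by omega)]

theorem eq_of_forall_ge_mem_pair {f : ℕ → Form} {u v : Form} {i : ℕ}
    (hpair : ∀ j, i ≤ j → f j = u ∨ f j = .next u) (hv : v.IsU ∨ v.IsR)
    (hinf : {j | f j = v}.Infinite) : v = u := by
  obtain ⟨j, hj : f j = v, hij⟩ := hinf.exists_gt i
  rcases hpair j hij.le with h | h
  · exact hj ▸ h
  · rw [hj] at h
    subst h
    cases hv <;> contradiction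

theorem UR_thread_eventually_stable_general (θ : Form) (cfg : ℕ → Config) (blk : ℕ → Block)
    (f : ℕ → Form) (hthread : IsThread cfg blk f)
    (hUR : IsUThread θ f ∨ IsRThread θ f) :
    ∃ i : ℕ, (IsUThread θ f → (f i).IsU) ∧ (IsRThread θ f → (f i).IsR) ∧
      ∀ j, i ≤ j → f j = f i ∨ f j = Form.next (f i) := by
  obtain ⟨u, hu, hinf⟩ : ∃ u : Form, (u.IsU ∨ u.IsR) ∧ {j | f j = u}.Infinite := by
    rcases hUR with ⟨a, b, -, hinf⟩ | ⟨a, b, -, hinf⟩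
    exacts [⟨.unt a b, Or.inl trivial, hinf⟩, ⟨.rel a b, Or.inr trivial, hinf⟩]
  obtain ⟨i, rfl, hpair⟩ := exists_forall_ge_mem_pair hthread.threadStep hu hinf
  refine ⟨i, ?_, ?_, hpair⟩
  · rintro ⟨a, b, -, hab⟩
    rw [← eq_of_forall_ge_mem_pair hpair (v := .unt a b) (Or.inl trivial) hab]
    trivial
  · rintro ⟨a, b, -, hab⟩
    rw [← eq_of_forall_ge_mem_pair hpair (v := .rel a b) (Or.inr trivial) hab]
    trivial

/-- **Lemma.** For every `U`- or `R`-thread `ψ₀, ψ₁, …` in a trace of an infinite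
play there is an `i` such that `ψᵢ` is a `U`-, resp. an `R`-formula, and
`ψⱼ = ψᵢ` or `ψⱼ = Xψᵢ` for all `j ≥ i`. -/
theorem UR_thread_eventually_stable (θ : Form) (hθ : IsStateForm θ)
    (cfg : ℕ → Config) (hplay : IsInfPlay θ cfg)
    (blk : ℕ → Block) (htrace : IsTrace cfg blk)
    (f : ℕ → Form) (hthread : IsThread cfg blk f)
    (hUR : IsUThread θ f ∨ IsRThread θ f) :
    ∃ i : ℕ, (IsUThread θ f → (f i).IsU) ∧ (IsRThread θ f → (f i).IsR) ∧
      ∀ j, i ≤ j → f j = f i ∨ f j = Form.next (f i) :=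
  UR_thread_eventually_stable_general θ cfg blk f hthread hUR
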